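/- Let F be a singular foliation on a manifold M, let (V, t_V, s_V) be a bisubmersion for F in the sense of Androulidakis–Skandalis, and let p : U → V be a smooth submersion from a manifold U. Then (U, t_V ∘ p, s_V ∘ p) is again a bisubmersion for F in the sense of Androulidakis–Skandalis. -/

import Mathlib

open Manifold Topology Function Set

noncomputable section

/-- Rough vector fields on a manifold `M`: sections of the tangent bundle. -/
abbrev VectorFieldOn {E H : Type*} [NormedAddCommGroup E] [NormedSpace ℝ E]
    [TopologicalSpace H] (I : ModelWithCorners ℝ E H)
    (M : Type*) [TopologicalSpace M] [ChartedSpace H M] : Type _ :=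
  ∀ x : M, TangentSpace I x

section Defs

variable {E H : Type*} [NormedAddCommGroup E] [NormedSpace ℝ E] [TopologicalSpace H]
  (I : ModelWithCorners ℝ E H)
  {M : Type*} [TopologicalSpace M] [ChartedSpace H M] [IsManifold I (⊤ : ℕ∞) M]

/-- A vector field is smooth iff it is a smooth section of the tangent bundle. -/
def IsSmoothVF (X : VectorFieldOn I M) : Prop :=
  ContMDiff I I.tangent (⊤ : ℕ∞) (fun x => (⟨x, X x⟩ : TangentBundle I M))

/-- A vector field is smooth on a subset `O` iff the corresponding section of the
tangent bundle is smooth on `O`. -/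
def IsSmoothVFOn (X : VectorFieldOn I M) (O : Set M) : Prop :=
  ContMDiffOn I I.tangent (⊤ : ℕ∞) (fun x => (⟨x, X x⟩ : TangentBundle I M)) O

/-- The support of a vector field: the closure of the set where it is nonzero. -/
def suppVF (X : VectorFieldOn I M) : Set M := closure {x : M | X x ≠ 0}

/-- A vector field is compactly supported iff its support is compact. -/
def IsCptSuppVF (X : VectorFieldOn I M) : Prop := IsCompact (suppVF I X)

/-- A real valued function on a manifold is smooth. -/
def IsSmoothFn (f : M → ℝ) : Prop := ContMDiff I 𝓘(ℝ) (⊤ : ℕ∞) f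

/-- `f ∈ C_c^∞(M)`: `f` is smooth and compactly supported. -/
def IsCcFn (f : M → ℝ) : Prop := IsSmoothFn I f ∧ HasCompactSupport f

/-- `𝔛_c(M)`: the set of compactly supported smooth vector fields on `M`. -/
def XC : Set (VectorFieldOn I M) := {X | IsSmoothVF I X ∧ IsCptSuppVF I X}

/-- `F` is a `C^∞(M)`-submodule of `𝔛_c(M)`: a set of compactly supported smooth
vector fields closed under addition and under multiplication by smooth functions. -/
structure IsCinftySubmodule (F : Set (VectorFieldOn I M)) : Prop where
  subset_XC : F ⊆ XC I
  add_mem : ∀ X ∈ F, ∀ Y ∈ F, (fun x => X x + Y x) ∈ F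
  smul_mem : ∀ f : M → ℝ, IsSmoothFn I f → ∀ X ∈ F, (fun x => f x • X x) ∈ F

/-- `X` is a finite `C_c^∞(M)`-linear combination of elements of `S`. -/
def IsCcSpan (S : Set (VectorFieldOn I M)) (X : VectorFieldOn I M) : Prop :=
  ∃ (k : ℕ) (g : Fin k → M → ℝ) (Y : Fin k → VectorFieldOn I M),
    (∀ i, IsCcFn I (g i)) ∧ (∀ i, Y i ∈ S) ∧ ∀ x, X x = ∑ i, g i x • Y i x

/-- `𝒢` is a generating set for the module `F`: the elements of `𝒢` are smooth vector
fields, `g • Y ∈ F` for every `g ∈ C_c^∞(M)` and `Y ∈ 𝒢`, and every element of `F` is a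
finite `C_c^∞(M)`-linear combination of elements of `𝒢`. -/
structure IsGeneratingSet (F 𝒢 : Set (VectorFieldOn I M)) : Prop where
  smooth : ∀ Y ∈ 𝒢, IsSmoothVF I Y
  smul_mem : ∀ g : M → ℝ, IsCcFn I g → ∀ Y ∈ 𝒢, (fun x => g x • Y x) ∈ F
  spans : ∀ X ∈ F, IsCcSpan I 𝒢 X

/-- The sum of two sets of vector fields. -/
def setAddVF (S T : Set (VectorFieldOn I M)) : Set (VectorFieldOn I M) :=
  {X | ∃ A ∈ S, ∃ B ∈ T, ∀ x, X x = A x + B x}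

/-- The module `F` is locally finitely generated: each point has an open neighbourhood
`O` carrying finitely many vector fields, smooth on `O`, such that every element of `F`
supported in `O` coincides on `O` with a `C_c^∞(O)`-linear combination of them. -/
def LocallyFinGen (F : Set (VectorFieldOn I M)) : Prop :=
  ∀ x : M, ∃ O : Set M, IsOpen O ∧ x ∈ O ∧
    ∃ (k : ℕ) (Y : Fin k → VectorFieldOn I M),
      (∀ i, IsSmoothVFOn I (Y i) O) ∧
      ∀ X ∈ F, suppVF I X ⊆ O →
        ∃ g : Fin k → M → ℝ, (∀ i, IsCcFn I (g i) ∧ tsupport (g i) ⊆ O) ∧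
          ∀ x' ∈ O, X x' = ∑ i, g i x' • Y i x'

variable {E' H' : Type*} [NormedAddCommGroup E'] [NormedSpace ℝ E'] [TopologicalSpace H']
  (I' : ModelWithCorners ℝ E' H')
  {N : Type*} [TopologicalSpace N] [ChartedSpace H' N] [IsManifold I' (⊤ : ℕ∞) N]

/-- `Z` is `φ`-related to `Y` : `dφ_u (Z u) = Y (φ u)` for all `u`. -/
def IsPhiRelated (φ : M → N) (Z : VectorFieldOn I M) (Y : VectorFieldOn I' N) : Prop :=
  ∀ u, mfderiv I I' φ u (Z u) = Y (φ u)

/-- `φ` is a submersion: its differential is surjective at every point. -/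
def IsSubmersion (φ : M → N) : Prop := ∀ u, Surjective (mfderiv I I' φ u)

/-- `Γ_c(ker dφ)`: the compactly supported smooth vector fields killed by `dφ`. -/
def KerGammaC (φ : M → N) : Set (VectorFieldOn I M) :=
  {X | X ∈ XC I ∧ ∀ u, mfderiv I I' φ u (X u) = 0}

/-- The pullback module `φ⁻¹(F)` of a module of vector fields under a smooth map. -/
def PullbackModule (φ : M → N) (F : Set (VectorFieldOn I' N)) :
    Set (VectorFieldOn I M) :=
  {X | X ∈ XC I ∧ ∃ (k : ℕ) (f : Fin k → M → ℝ) (Y : Fin k → VectorFieldOn I' N),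
    (∀ i, IsCcFn I (f i)) ∧ (∀ i, Y i ∈ F) ∧
    ∀ u, mfderiv I I' φ u (X u) = ∑ i, f i u • Y i (φ u)}

end Defs

section Lie

variable {n : ℕ} {M : Type*} [TopologicalSpace M]
  [ChartedSpace (EuclideanSpace ℝ (Fin n)) M] [IsManifold (𝓡 n) (⊤ : ℕ∞) M]

/-- The expression of a vector field in the chart around `x₀` (the pullback of `X`
under the inverse of the extended chart at `x₀`). -/
def chartPushVF (x₀ : M) (X : VectorFieldOn (𝓡 n) M)
    (v : EuclideanSpace ℝ (Fin n)) : EuclideanSpace ℝ (Fin n) :=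
  (mfderiv (𝓡 n) (𝓡 n) ((extChartAt (𝓡 n) x₀).symm) v).inverse
    (X ((extChartAt (𝓡 n) x₀).symm v))

/-- The Lie bracket of two vector fields on a manifold, computed in the chart around
the given point (as for `VectorField.mlieBracket` in Mathlib). -/
def mlie (X Y : VectorFieldOn (𝓡 n) M) : VectorFieldOn (𝓡 n) M := fun x₀ =>
  (mfderiv (𝓡 n) (𝓡 n) (extChartAt (𝓡 n) x₀) x₀).inverse
    (show TangentSpace (𝓡 n) (extChartAt (𝓡 n) x₀ x₀) from
      (VectorField.lieBracket ℝ (chartPushVF x₀ X) (chartPushVF x₀ Y)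
        (extChartAt (𝓡 n) x₀ x₀) : EuclideanSpace ℝ (Fin n)))

/-- A singular foliation on a manifold: an involutive, locally finitely generated
`C^∞(M)`-submodule of `𝔛_c(M)`. -/
structure IsSingularFoliation (F : Set (VectorFieldOn (𝓡 n) M)) : Prop where
  submodule : IsCinftySubmodule (𝓡 n) F
  involutive : ∀ X ∈ F, ∀ Y ∈ F, mlie X Y ∈ F
  locFinGen : LocallyFinGen (𝓡 n) F

end Lie

section MoreDefs

variable {E H : Type*} [NormedAddCommGroup E] [NormedSpace ℝ E] [TopologicalSpace H]
  (I : ModelWithCorners ℝ E H)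
  {M : Type*} [TopologicalSpace M] [ChartedSpace H M] [IsManifold I (⊤ : ℕ∞) M]
  {E' H' : Type*} [NormedAddCommGroup E'] [NormedSpace ℝ E'] [TopologicalSpace H']
  (I' : ModelWithCorners ℝ E' H')
  {N : Type*} [TopologicalSpace N] [ChartedSpace H' N] [IsManifold I' (⊤ : ℕ∞) N]

/-- The global hull of a module of compactly supported vector fields: the smooth vector
fields `X` such that `g • X` belongs to the module for every `g ∈ C_c^∞(M)`. -/
def GlobalHull (F : Set (VectorFieldOn I M)) : Set (VectorFieldOn I M) :=
  {X | IsSmoothVF I X ∧ ∀ g : M → ℝ, IsCcFn I g → (fun x => g x • X x) ∈ F}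

/-- `X` is `f`-projectable, with (necessarily unique, when `f` is surjective)
projection the smooth vector field `Y`. -/
def ProjectableTo (f : M → N) (X : VectorFieldOn I M) (Y : VectorFieldOn I' N) : Prop :=
  IsSmoothVF I' Y ∧ IsPhiRelated I I' f X Y

/-- The pushforward `f_*(F)`: all finite `C_c^∞(N)`-linear combinations of projections
`f_* X` of `f`-projectable elements `X` of the global hull of `F`. -/
def PushforwardModule (f : M → N) (F : Set (VectorFieldOn I M)) :
    Set (VectorFieldOn I' N) :=
  {W | IsCcSpan I' {Y | ∃ X ∈ GlobalHull I F, ProjectableTo I I' f X Y} W}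

end MoreDefs

section PairDefs

variable {n : ℕ} {M : Type*} [TopologicalSpace M]
  [ChartedSpace (EuclideanSpace ℝ (Fin n)) M] [IsManifold (𝓡 n) (⊤ : ℕ∞) M]

/-- The right-invariant extension `→X` of a vector field `X` on `M` to the pair
groupoid `M × M`, namely `(x, y) ↦ (X x, 0)`. -/
def rightInvVF (X : VectorFieldOn (𝓡 n) M) :
    VectorFieldOn ((𝓡 n).prod (𝓡 n)) (M × M) :=
  fun p => (show TangentSpace ((𝓡 n).prod (𝓡 n)) p from ((X p.1, 0) :
    EuclideanSpace ℝ (Fin n) × EuclideanSpace ℝ (Fin n)))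

/-- The left-invariant extension `←X` of a vector field `X` on `M` to the pair
groupoid `M × M`, namely `(x, y) ↦ (0, X y)`. -/
def leftInvVF (X : VectorFieldOn (𝓡 n) M) :
    VectorFieldOn ((𝓡 n).prod (𝓡 n)) (M × M) :=
  fun p => (show TangentSpace ((𝓡 n).prod (𝓡 n)) p from ((0, X p.2) :
    EuclideanSpace ℝ (Fin n) × EuclideanSpace ℝ (Fin n)))

/-- `→F`: the `C_c^∞(M × M)`-span of the vector fields `→X`, `X ∈ F`. -/
def rightInvModule (F : Set (VectorFieldOn (𝓡 n) M)) :
    Set (VectorFieldOn ((𝓡 n).prod (𝓡 n)) (M × M)) :=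
  {W | IsCcSpan ((𝓡 n).prod (𝓡 n)) {W' | ∃ X ∈ F, W' = rightInvVF X} W}

/-- `←F`: the `C_c^∞(M × M)`-span of the vector fields `←X`, `X ∈ F`. -/
def leftInvModule (F : Set (VectorFieldOn (𝓡 n) M)) :
    Set (VectorFieldOn ((𝓡 n).prod (𝓡 n)) (M × M)) :=
  {W | IsCcSpan ((𝓡 n).prod (𝓡 n)) {W' | ∃ X ∈ F, W' = leftInvVF X} W}

end PairDefs

/-- `(U, tU, sU)` is a bisubmersion for `F` in the sense of Androulidakis–Skandalis:
`tU` and `sU` are smooth submersions to `M` and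
`tU⁻¹(F) = Γ_c(ker dtU) + Γ_c(ker dsU) = sU⁻¹(F)`. -/
structure IsASBisubmersion {n k : ℕ} {M U : Type*}
    [TopologicalSpace M] [ChartedSpace (EuclideanSpace ℝ (Fin n)) M]
    [IsManifold (𝓡 n) (⊤ : ℕ∞) M]
    [TopologicalSpace U] [ChartedSpace (EuclideanSpace ℝ (Fin k)) U]
    [IsManifold (𝓡 k) (⊤ : ℕ∞) U]
    (F : Set (VectorFieldOn (𝓡 n) M)) (tU sU : U → M) : Prop where
  smooth_t : ContMDiff (𝓡 k) (𝓡 n) (⊤ : ℕ∞) tU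
  smooth_s : ContMDiff (𝓡 k) (𝓡 n) (⊤ : ℕ∞) sU
  subm_t : IsSubmersion (𝓡 k) (𝓡 n) tU
  subm_s : IsSubmersion (𝓡 k) (𝓡 n) sU
  pullback_t : PullbackModule (𝓡 k) (𝓡 n) tU F
    = setAddVF (𝓡 k) (KerGammaC (𝓡 k) (𝓡 n) tU) (KerGammaC (𝓡 k) (𝓡 n) sU)
  pullback_s : PullbackModule (𝓡 k) (𝓡 n) sU F
    = setAddVF (𝓡 k) (KerGammaC (𝓡 k) (𝓡 n) tU) (KerGammaC (𝓡 k) (𝓡 n) sU)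

/-!
Write `t = tV ∘ p` and `s = sV ∘ p`. Submersions lift vector fields: locally through a smooth
right inverse of the differential written in charts, globally by gluing local lifts with a
partition of unity, which is possible because the lifts of a given vector form an affine set.

If `dt X = ∑ fᵢ • Yᵢ ∘ t` with `Yᵢ ∈ F`, lift a cut-off of `Yᵢ` along `tV` and split the lift as
`A + B` with `A ∈ Γ_c(ker dtV)` and `B ∈ Γ_c(ker dsV)`; a lift of `fᵢ • B` along `p` lies in
`Γ_c(ker ds)` and has `dt`-image `fᵢ • Yᵢ ∘ t`, so `X` minus the sum of these lifts lies in
`Γ_c(ker dt)`. Conversely, if `B ∈ Γ_c(ker ds)` then `dp B` is a compactly supported section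
of `ker dsV` along `p`. Local frames of `ker dsV` and a partition of unity write it as
`∑ gᵢ • Cᵢ ∘ p` with `Cᵢ ∈ Γ_c(ker dsV) ⊆ tV⁻¹(F)`, so `dt B` lies in the span of `F ∘ t`.
Exchanging `tV` and `sV` gives the identity for `s`.
-/

section VectorFields

variable {E H : Type*} [NormedAddCommGroup E] [NormedSpace ℝ E] [TopologicalSpace H]
  {I : ModelWithCorners ℝ E H} {M : Type*} [TopologicalSpace M] [ChartedSpace H M]
  {E' H' : Type*} [NormedAddCommGroup E'] [NormedSpace ℝ E'] [TopologicalSpace H']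
  {I' : ModelWithCorners ℝ E' H'} {N : Type*} [TopologicalSpace N] [ChartedSpace H' N]

theorem setAddVF_comm (S T : Set (VectorFieldOn I M)) :
    setAddVF I S T = setAddVF I T S := by
  ext X
  constructor <;> rintro ⟨A, hA, B, hB, h⟩ <;> exact ⟨B, hB, A, hA, fun x => by rw [h x, add_comm]⟩

theorem IsCcFn.mul {f g : M → ℝ} (hf : IsCcFn I f) (hg : IsSmoothFn I g) :
    IsCcFn I (fun x => f x * g x) :=
  ⟨hf.1.mul hg, hf.2.mul_right⟩

theorem mfderiv_comp_apply_of_contMDiff {E'' H'' : Type*} [NormedAddCommGroup E'']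
    [NormedSpace ℝ E''] [TopologicalSpace H''] {I'' : ModelWithCorners ℝ E'' H''}
    {P : Type*} [TopologicalSpace P] [ChartedSpace H'' P] {f : M → N} {g : N → P}
    (hf : ContMDiff I I' (⊤ : ℕ∞) f) (hg : ContMDiff I' I'' (⊤ : ℕ∞) g) (u : M)
    (v : TangentSpace I u) :
    mfderiv I I'' (g ∘ f) u v = mfderiv I' I'' g (f u) (mfderiv I I' f u v) :=
  mfderiv_comp_apply u (hg.mdifferentiableAt (by simp)) (hf.mdifferentiableAt (by simp)) v

variable [IsManifold I (⊤ : ℕ∞) M]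

theorem add_mem_XC {X Y : VectorFieldOn I M} (hX : X ∈ XC I) (hY : Y ∈ XC I) :
    (fun x => X x + Y x) ∈ XC I :=
  ⟨hX.1.add_section hY.1, HasCompactSupport.add hX.2 hY.2⟩

theorem sub_mem_XC {X Y : VectorFieldOn I M} (hX : X ∈ XC I) (hY : Y ∈ XC I) :
    (fun x => X x - Y x) ∈ XC I :=
  ⟨hX.1.sub_section hY.1, HasCompactSupport.sub hX.2 hY.2⟩

theorem zero_mem_XC : (fun _ : M => (0 : E)) ∈ XC I :=
  ⟨Bundle.contMDiff_zeroSection ℝ (TangentSpace I), HasCompactSupport.zero⟩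

theorem sum_mem_XC {ι : Type*} (s : Finset ι) {X : ι → VectorFieldOn I M}
    (h : ∀ i ∈ s, X i ∈ XC I) : (fun x => ∑ i ∈ s, X i x) ∈ XC I := by
  classical
  induction s using Finset.induction with
  | empty => exact zero_mem_XC
  | insert a s ha ih =>
    simp only [Finset.sum_insert ha]
    exact add_mem_XC (h a (s.mem_insert_self a)) (ih fun i hi => h i (s.mem_insert_of_mem hi))

theorem zero_mem_kerGammaC {φ : M → N} : (fun _ : M => (0 : E)) ∈ KerGammaC I I' φ :=
  ⟨zero_mem_XC, fun u => (mfderiv I I' φ u).map_zero⟩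

theorem sum_mem_kerGammaC {φ : M → N} {ι : Type*} (s : Finset ι) {X : ι → VectorFieldOn I M}
    (h : ∀ i ∈ s, X i ∈ KerGammaC I I' φ) : (fun x => ∑ i ∈ s, X i x) ∈ KerGammaC I I' φ :=
  ⟨sum_mem_XC s fun i hi => (h i hi).1, fun u => by
    simp only [map_sum]
    exact Finset.sum_eq_zero fun i hi => (h i hi).2 u⟩

end VectorFields

section Coordinates

variable {E H : Type*} [NormedAddCommGroup E] [NormedSpace ℝ E] [TopologicalSpace H]
  {I : ModelWithCorners ℝ E H}
  {M : Type*} [TopologicalSpace M] [ChartedSpace H M] [IsManifold I (⊤ : ℕ∞) M]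
  {EJ HJ : Type*} [NormedAddCommGroup EJ] [NormedSpace ℝ EJ] [TopologicalSpace HJ]
  {J : ModelWithCorners ℝ EJ HJ}
  {N : Type*} [TopologicalSpace N] [ChartedSpace HJ N]

theorem tangentCoordChange_tangentCoordChange {x z : M} (hz : z ∈ (extChartAt I x).source)
    (v : E) : tangentCoordChange I x z z (tangentCoordChange I z x z v) = v := by
  rw [tangentCoordChange_comp ⟨⟨mem_extChartAt_source z, hz⟩, mem_extChartAt_source z⟩,
    tangentCoordChange_self (mem_extChartAt_source z)]

theorem tangentCoordChange_injective {x z : M} (hz : z ∈ (extChartAt I x).source) :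
    Injective (tangentCoordChange I z x z) :=
  LeftInverse.injective (tangentCoordChange_tangentCoordChange hz)

theorem contMDiffAt_tangentCoordChange {x y z : M}
    (hz : z ∈ (chartAt H x).source ∩ (chartAt H y).source) :
    ContMDiffAt I 𝓘(ℝ, E →L[ℝ] E) (⊤ : ℕ∞) (tangentCoordChange I x y) z := by
  have : (tangentBundleCore I M).IsContMDiff I (⊤ : ℕ∞) := by
    have : IsManifold I (((⊤ : ℕ∞) : WithTop ℕ∞) + 1) M := by simpa
    exact tangentBundleCore.isContMDiff
  exact ((tangentBundleCore I M).contMDiffOn_coordChange (IB := I) (n := (⊤ : ℕ∞))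
    (achart H x) (achart H y)).contMDiffAt
    ((((chartAt H x).open_source).inter (chartAt H y).open_source).mem_nhds hz)

theorem contMDiffAt_tangentCoordChange_of_section_along {q : N → M}
    {W : ∀ u : N, TangentSpace I (q u)} {x₀ : M} {u₁ : N} (hq : ContMDiffAt J I (⊤ : ℕ∞) q u₁)
    (hx : q u₁ ∈ (chartAt H x₀).source)
    (hW : ContMDiffAt J (I.prod 𝓘(ℝ, E)) (⊤ : ℕ∞)
      (fun u => (⟨q u, W u⟩ : TangentBundle I M)) u₁) :
    ContMDiffAt J 𝓘(ℝ, E) (⊤ : ℕ∞)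
      (fun u => tangentCoordChange I (q u) x₀ (q u) (W u)) u₁ := by
  have hc : ContMDiffAt J 𝓘(ℝ, E →L[ℝ] E) (⊤ : ℕ∞)
      (fun u => tangentCoordChange I (q u₁) x₀ (q u)) u₁ :=
    (contMDiffAt_tangentCoordChange ⟨mem_chart_source H (q u₁), hx⟩).comp u₁ hq
  refine (hc.clm_apply (Bundle.contMDiffAt_totalSpace.mp hW).2).congr_of_eventuallyEq ?_
  filter_upwards [hq.continuousAt.preimage_mem_nhds
      ((chartAt H (q u₁)).open_source.mem_nhds (mem_chart_source H (q u₁))),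
    hq.continuousAt.preimage_mem_nhds ((chartAt H x₀).open_source.mem_nhds hx)] with u h₁ h₂
  rw [Set.mem_preimage, ← extChartAt_source (I := I)] at h₁ h₂
  erw [tangentCoordChange_comp ⟨⟨mem_extChartAt_source (I := I) (q u), h₁⟩, h₂⟩]

theorem contMDiffAt_section_of_tangentCoordChange {x₀ v₁ : M} {O : Set M} (hO : IsOpen O)
    (hOx₀ : O ⊆ (chartAt H x₀).source) (hv₁ : v₁ ∈ O) {w : M → E}
    (hw : ContMDiffAt I 𝓘(ℝ, E) (⊤ : ℕ∞) w v₁) {X : VectorFieldOn I M}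
    (hX : ∀ v ∈ O, X v = tangentCoordChange I x₀ v v (w v)) :
    ContMDiffAt I (I.prod 𝓘(ℝ, E)) (⊤ : ℕ∞) (fun v => (⟨v, X v⟩ : TangentBundle I M)) v₁ := by
  rw [Bundle.contMDiffAt_section]
  refine ((contMDiffAt_tangentCoordChange ⟨hOx₀ hv₁, mem_chart_source H v₁⟩).clm_apply
    hw).congr_of_eventuallyEq ?_
  filter_upwards [hO.mem_nhds hv₁,
    (chartAt H v₁).open_source.mem_nhds (mem_chart_source H v₁)] with v hvO hv
  have hv₀ : v ∈ (extChartAt I x₀).source := by rw [extChartAt_source]; exact hOx₀ hvO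
  rw [← extChartAt_source (I := I)] at hv
  show tangentCoordChange I v v₁ v (X v) = _
  rw [hX v hvO, tangentCoordChange_comp ⟨⟨hv₀, mem_extChartAt_source v⟩, hv⟩]

variable [IsManifold J (⊤ : ℕ∞) N]

theorem inTangentCoordinates_mfderiv_apply {q : N → M} {u₀ u : N}
    (hu : u ∈ (chartAt HJ u₀).source) (hqu : q u ∈ (chartAt H (q u₀)).source) (w : EJ) :
    inTangentCoordinates J I id q (mfderiv J I q) u₀ u w
      = tangentCoordChange I (q u) (q u₀) (q u)
        (mfderiv J I q u (tangentCoordChange J u₀ u u w)) := by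
  rw [inTangentCoordinates_eq (f := id) (g := q) (ϕ := mfderiv J I q) hu hqu]
  rfl

theorem inTangentCoordinates_mfderiv_self {q : N → M} {u₀ : N} :
    inTangentCoordinates J I id q (mfderiv J I q) u₀ u₀ = mfderiv J I q u₀ := by
  ext w
  rw [inTangentCoordinates_mfderiv_apply (mem_chart_source HJ u₀) (mem_chart_source H (q u₀)),
    tangentCoordChange_self (mem_extChartAt_source (I := J) u₀)]
  exact tangentCoordChange_self (mem_extChartAt_source (I := I) (q u₀))

theorem contMDiffAt_inTangentCoordinates_mfderiv {q : N → M} (hq : ContMDiff J I (⊤ : ℕ∞) q)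
    (u₀ : N) {u₁ : N} (hu₁ : u₁ ∈ (chartAt HJ u₀).source)
    (hqu₁ : q u₁ ∈ (chartAt H (q u₀)).source) :
    ContMDiffAt J 𝓘(ℝ, EJ →L[ℝ] E) (⊤ : ℕ∞)
      (inTangentCoordinates J I id q (mfderiv J I q) u₀) u₁ := by
  have hD₁ : ContMDiffAt J 𝓘(ℝ, EJ →L[ℝ] E) (⊤ : ℕ∞)
      (inTangentCoordinates J I id q (mfderiv J I q) u₁) u₁ :=
    (hq u₁).mfderiv_const (by simp)
  have hc₁ : ContMDiffAt J 𝓘(ℝ, E →L[ℝ] E) (⊤ : ℕ∞)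
      (fun u => tangentCoordChange I (q u₁) (q u₀) (q u)) u₁ :=
    (contMDiffAt_tangentCoordChange ⟨mem_chart_source H (q u₁), hqu₁⟩).comp u₁ (hq u₁)
  have hc₂ : ContMDiffAt J 𝓘(ℝ, EJ →L[ℝ] EJ) (⊤ : ℕ∞) (tangentCoordChange J u₀ u₁) u₁ :=
    contMDiffAt_tangentCoordChange ⟨hu₁, mem_chart_source HJ u₁⟩
  refine (hc₁.clm_comp (hD₁.clm_comp hc₂)).congr_of_eventuallyEq ?_
  have hqc : ContinuousAt q u₁ := (hq u₁).continuousAt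
  filter_upwards [(chartAt HJ u₀).open_source.mem_nhds hu₁,
    (chartAt HJ u₁).open_source.mem_nhds (mem_chart_source HJ u₁),
    hqc.preimage_mem_nhds ((chartAt H (q u₀)).open_source.mem_nhds hqu₁),
    hqc.preimage_mem_nhds ((chartAt H (q u₁)).open_source.mem_nhds (mem_chart_source H (q u₁)))]
    with u h₀ h₁ hq₀ hq₁
  ext w
  rw [inTangentCoordinates_mfderiv_apply h₀ hq₀]
  show _ = tangentCoordChange I (q u₁) (q u₀) (q u)
      ((inTangentCoordinates J I id q (mfderiv J I q) u₁ u) (tangentCoordChange J u₀ u₁ u w))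
  erw [inTangentCoordinates_mfderiv_apply h₁ hq₁]
  rw [Set.mem_preimage, ← extChartAt_source (I := I)] at hq₀ hq₁
  rw [← extChartAt_source (I := J)] at h₀ h₁
  erw [tangentCoordChange_comp ⟨⟨h₀, h₁⟩, mem_extChartAt_source (I := J) u⟩,
    tangentCoordChange_comp ⟨⟨mem_extChartAt_source (I := I) (q u), hq₁⟩, hq₀⟩]

end Coordinates

section RightInverse

variable {F G : Type*} [NormedAddCommGroup F] [NormedSpace ℝ F] [NormedAddCommGroup G]
  [NormedSpace ℝ G] [FiniteDimensional ℝ G]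
  {EJ HJ : Type*} [NormedAddCommGroup EJ] [NormedSpace ℝ EJ] [TopologicalSpace HJ]
  {J : ModelWithCorners ℝ EJ HJ}
  {N : Type*} [TopologicalSpace N] [ChartedSpace HJ N]

/-- Fix a right inverse `σ₀` of `D u₀`; then `D u ∘ σ₀` is invertible near `u₀`, and
`σ₀ ∘ (D u ∘ σ₀)⁻¹` is a right inverse of `D u` depending smoothly on `u`. -/
theorem exists_contMDiffAt_rightInverse {D : N → F →L[ℝ] G} {u₀ : N} {O : Set N}
    (hO : IsOpen O) (hu₀ : u₀ ∈ O) (hD : ∀ u ∈ O, ContMDiffAt J 𝓘(ℝ, F →L[ℝ] G) (⊤ : ℕ∞) D u)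
    (hsurj : Surjective (D u₀)) :
    ∃ (O' : Set N) (σ : N → G →L[ℝ] F), IsOpen O' ∧ u₀ ∈ O' ∧ O' ⊆ O ∧
      (∀ u ∈ O', ContMDiffAt J 𝓘(ℝ, G →L[ℝ] F) (⊤ : ℕ∞) σ u) ∧
      ∀ u ∈ O', ∀ w, D u (σ u w) = w := by
  obtain ⟨σ₀', hσ₀'⟩ := (D u₀).toLinearMap.exists_rightInverse_of_surjective
    (LinearMap.range_eq_top.2 hsurj)
  let σ₀ : G →L[ℝ] F := LinearMap.toContinuousLinearMap σ₀'
  let g : N → G →L[ℝ] G := fun u => (D u).comp σ₀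
  have hg : ∀ u ∈ O, ContMDiffAt J 𝓘(ℝ, G →L[ℝ] G) (⊤ : ℕ∞) g u := fun u hu =>
    (hD u hu).clm_comp contMDiffAt_const
  have hg₀ : g u₀ = 1 := by
    ext w
    exact LinearMap.ext_iff.mp hσ₀' w
  refine ⟨{u ∈ O | IsUnit (g u)}, fun u => σ₀.comp (Ring.inverse (g u)), ?_,
    ⟨hu₀, hg₀ ▸ isUnit_one⟩, fun u hu => hu.1, ?_, ?_⟩
  · refine isOpen_iff_mem_nhds.2 fun u ⟨hu, hgu⟩ => ?_
    filter_upwards [hO.mem_nhds hu,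
      (hg u hu).continuousAt.preimage_mem_nhds (Units.isOpen.mem_nhds hgu)] with v hv hgv
    exact ⟨hv, hgv⟩
  · rintro u ⟨hu, ⟨gu, hgu⟩⟩
    have hinv : ContDiffAt ℝ ((⊤ : ℕ∞) : WithTop ℕ∞) Ring.inverse (g u) :=
      hgu ▸ contDiffAt_ringInverse ℝ gu
    exact contMDiffAt_const.clm_comp (hinv.comp_contMDiffAt (hg u hu))
  · rintro u ⟨-, hgu⟩ w
    change ((g u) * Ring.inverse (g u)) w = w
    rw [Ring.mul_inverse_cancel _ hgu]
    rfl

end RightInverse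

section Submersion

variable {E H : Type*} [NormedAddCommGroup E] [NormedSpace ℝ E] [TopologicalSpace H]
  {I : ModelWithCorners ℝ E H}
  {M : Type*} [TopologicalSpace M] [ChartedSpace H M] [IsManifold I (⊤ : ℕ∞) M]
  {EJ HJ : Type*} [NormedAddCommGroup EJ] [NormedSpace ℝ EJ] [TopologicalSpace HJ]
  {J : ModelWithCorners ℝ EJ HJ}
  {N : Type*} [TopologicalSpace N] [ChartedSpace HJ N] [IsManifold J (⊤ : ℕ∞) N]
  [FiniteDimensional ℝ E] {q : N → M}

theorem IsSubmersion.exists_rightInverse_inTangentCoordinates (hq : ContMDiff J I (⊤ : ℕ∞) q)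
    (hsub : IsSubmersion J I q) (u₀ : N) :
    ∃ (O : Set N) (σ : N → E →L[ℝ] EJ), IsOpen O ∧ u₀ ∈ O ∧
      O ⊆ (chartAt HJ u₀).source ∩ q ⁻¹' (chartAt H (q u₀)).source ∧
      (∀ u ∈ O, ContMDiffAt J 𝓘(ℝ, E →L[ℝ] EJ) (⊤ : ℕ∞) σ u) ∧
      ∀ u ∈ O, ∀ w, inTangentCoordinates J I id q (mfderiv J I q) u₀ u (σ u w) = w :=
  exists_contMDiffAt_rightInverse
    ((chartAt HJ u₀).open_source.inter ((chartAt H (q u₀)).open_source.preimage hq.continuous))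
    ⟨mem_chart_source HJ u₀, mem_chart_source H (q u₀)⟩
    (fun _ hu => contMDiffAt_inTangentCoordinates_mfderiv hq u₀ hu.1 hu.2)
    (by rw [inTangentCoordinates_mfderiv_self]; exact hsub u₀)

theorem IsSubmersion.exists_local_lift (hq : ContMDiff J I (⊤ : ℕ∞) q)
    (hsub : IsSubmersion J I q) {W : VectorFieldOn I M} (hW : IsSmoothVF I W) (u₀ : N) :
    ∃ O ∈ 𝓝 u₀, ∃ Y : VectorFieldOn J N, IsSmoothVFOn J Y O ∧
      ∀ u ∈ O, mfderiv J I q u (Y u) = W (q u) := by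
  obtain ⟨O, σ, hO, hu₀, hOchart, hσ, hσD⟩ :=
    hsub.exists_rightInverse_inTangentCoordinates hq u₀
  let Wc : N → E := fun u => tangentCoordChange I (q u) (q u₀) (q u) (W (q u))
  refine ⟨O, hO.mem_nhds hu₀, fun u => tangentCoordChange J u₀ u u (σ u (Wc u)),
    fun u hu => ?_, fun u hu => ?_⟩
  · have hWc : ContMDiffAt J 𝓘(ℝ, E) (⊤ : ℕ∞) Wc u :=
      contMDiffAt_tangentCoordChange_of_section_along (hq u) (hOchart hu).2
        ((hW (q u)).comp u (hq u))
    exact (contMDiffAt_section_of_tangentCoordChange hO (fun v hv => (hOchart hv).1) hu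
      ((hσ u hu).clm_apply hWc) fun _ _ => rfl).contMDiffWithinAt
  · have key := hσD u hu (Wc u)
    rw [inTangentCoordinates_mfderiv_apply (hOchart hu).1 (hOchart hu).2] at key
    have hqu : q u ∈ (extChartAt I (q u₀)).source := by
      rw [extChartAt_source]; exact (hOchart hu).2
    exact tangentCoordChange_injective hqu key

variable [FiniteDimensional ℝ EJ] [T2Space N] [SigmaCompactSpace N]

/-- The lifts of `f u • W (q u)` that vanish where `f` does form a convex set in each tangent
space, so local lifts glue along a partition of unity. -/
theorem IsSubmersion.exists_lift_smul (hq : ContMDiff J I (⊤ : ℕ∞) q)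
    (hsub : IsSubmersion J I q) {W : VectorFieldOn I M} (hW : IsSmoothVF I W) {f : N → ℝ}
    (hf : IsSmoothFn J f) :
    ∃ Z : VectorFieldOn J N, IsSmoothVF J Z ∧ (∀ u, f u = 0 → Z u = 0) ∧
      ∀ u, mfderiv J I q u (Z u) = f u • W (q u) := by
  let lifts (u : N) : Set (TangentSpace J u) :=
    {z | mfderiv J I q u z = f u • W (q u) ∧ (f u = 0 → z = 0)}
  have hconv (u : N) : Convex ℝ (lifts u) := by
    rintro z ⟨hz, hz₀⟩ z' ⟨hz', hz'₀⟩ a b - - hab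
    refine ⟨?_, fun hfu => by simp [hz₀ hfu, hz'₀ hfu]⟩
    rw [map_add, map_smul, map_smul, hz, hz', ← add_smul, hab, one_smul]
  obtain ⟨Z, hZ⟩ := exists_contMDiffSection_forall_mem_convex_of_local J (n := (⊤ : ℕ∞))
    (TangentSpace J) lifts hconv fun u₀ => by
      obtain ⟨O, hO, Y, hY, hYq⟩ := hsub.exists_local_lift hq hW u₀
      refine ⟨O, hO, fun u => f u • Y u, hf.contMDiffOn.smul_section hY, fun u hu => ⟨?_, ?_⟩⟩
      · rw [map_smul, hYq u hu]
      · intro hfu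
        simp [hfu]
  exact ⟨Z, Z.contMDiff, fun u => (hZ u).2, fun u => (hZ u).1⟩

theorem IsSubmersion.exists_lift_smul_mem_XC (hq : ContMDiff J I (⊤ : ℕ∞) q)
    (hsub : IsSubmersion J I q) {W : VectorFieldOn I M} (hW : IsSmoothVF I W) {f : N → ℝ}
    (hf : IsCcFn J f) :
    ∃ Z ∈ XC J, ∀ u, mfderiv J I q u (Z u) = f u • W (q u) := by
  obtain ⟨Z, hZ, hZ₀, hZq⟩ := hsub.exists_lift_smul hq hW hf.1
  exact ⟨Z, ⟨hZ, hf.2.mono fun u hZu hfu => hZu (hZ₀ u hfu)⟩, hZq⟩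

end Submersion

section KernelProjection

variable {E H : Type*} [NormedAddCommGroup E] [NormedSpace ℝ E] [TopologicalSpace H]
  {I : ModelWithCorners ℝ E H}
  {M : Type*} [TopologicalSpace M] [ChartedSpace H M]
  {EJ HJ : Type*} [NormedAddCommGroup EJ] [NormedSpace ℝ EJ] [TopologicalSpace HJ]
  {J : ModelWithCorners ℝ EJ HJ}
  {V : Type*} [TopologicalSpace V] [ChartedSpace HJ V] [IsManifold J (⊤ : ℕ∞) V]
  {EU HU : Type*} [NormedAddCommGroup EU] [NormedSpace ℝ EU] [TopologicalSpace HU]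
  {JU : ModelWithCorners ℝ EU HU}
  {U : Type*} [TopologicalSpace U] [ChartedSpace HU U]
  {s : V → M}

theorem smul_mem_kerGammaC_of_tsupport_subset {Y : VectorFieldOn J V} {O : Set V}
    (hO : IsOpen O) (hY : IsSmoothVFOn J Y O) (hYs : ∀ v ∈ O, mfderiv J I s v (Y v) = 0)
    {ψ : V → ℝ} (hψ : IsCcFn J ψ) (hψO : tsupport ψ ⊆ O) :
    (fun v => ψ v • Y v) ∈ KerGammaC J I s := by
  refine ⟨⟨hψ.1.contMDiffOn.smul_section_of_tsupport hO hψO hY, hψ.2.smul_right⟩, fun v => ?_⟩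
  change mfderiv J I s v (ψ v • Y v) = 0
  by_cases hv : v ∈ O
  · rw [map_smul, hYs v hv, smul_zero]
  · rw [image_eq_zero_of_notMem_tsupport fun h => hv (hψO h), zero_smul, map_zero]

theorem isCcFn_mul_tangentCoordChange {p : U → V} (hp : ContMDiff JU J (⊤ : ℕ∞) p)
    {W : ∀ u : U, TangentSpace J (p u)}
    (hW : ContMDiff JU (J.prod 𝓘(ℝ, EJ)) (⊤ : ℕ∞) (fun u => (⟨p u, W u⟩ : TangentBundle J V)))
    (hWc : HasCompactSupport W) {x₀ : V} {ρ : V → ℝ} (hρ : IsSmoothFn J ρ)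
    (hρx : tsupport ρ ⊆ (chartAt HJ x₀).source) (ℓ : EJ →L[ℝ] ℝ) :
    IsCcFn JU (fun u => ρ (p u) * ℓ (tangentCoordChange J (p u) x₀ (p u) (W u))) := by
  refine ⟨contMDiff_of_tsupport fun u hu => ?_, HasCompactSupport.mul_left (hWc.mono ?_)⟩
  · have hpu : p u ∈ (chartAt HJ x₀).source :=
      hρx (tsupport_comp_subset_preimage ρ hp.continuous (tsupport_mul_subset_left hu))
    exact ((hρ (p u)).comp u (hp u)).mul (contMDiffAt_const.clm_apply
      (contMDiffAt_tangentCoordChange_of_section_along (hp u) hpu (hW u)))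
  · intro u hu hWu
    exact hu (by simp [hWu])

variable [IsManifold I (⊤ : ℕ∞) M]

/-- In the charts at `v₀` and `s v₀`, with `D` the differential of `s` and `σ` a smooth right
inverse of it, `1 - σ ∘ D` is a smooth family of projections onto `ker D`. -/
theorem IsSubmersion.exists_local_kernel_projection [FiniteDimensional ℝ E]
    (hs : ContMDiff J I (⊤ : ℕ∞) s) (hsub : IsSubmersion J I s) (v₀ : V) :
    ∃ (O : Set V) (C : ∀ v : V, EJ →ₗ[ℝ] TangentSpace J v), IsOpen O ∧ v₀ ∈ O ∧
      O ⊆ (chartAt HJ v₀).source ∧ (∀ w, IsSmoothVFOn J (fun v => C v w) O) ∧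
      (∀ w, ∀ v ∈ O, mfderiv J I s v (C v w) = 0) ∧
      ∀ v ∈ O, ∀ x : TangentSpace J v, mfderiv J I s v x = 0 →
        C v (tangentCoordChange J v v₀ v x) = x := by
  obtain ⟨O, σ, hO, hv₀, hOchart, hσ, hσD⟩ :=
    hsub.exists_rightInverse_inTangentCoordinates hs v₀
  let D := inTangentCoordinates J I id s (mfderiv J I s) v₀
  let P : V → EJ →L[ℝ] EJ := fun v => 1 - (σ v).comp (D v)
  have hDP : ∀ v ∈ O, ∀ w, D v (P v w) = 0 := fun v hv w => by
    simpa [P, sub_eq_zero] using (hσD v hv (D v w)).symm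
  have hextJ : ∀ v ∈ O, v ∈ (extChartAt J v₀).source := fun v hv => by
    rw [extChartAt_source]; exact (hOchart hv).1
  have hextI : ∀ v ∈ O, s v ∈ (extChartAt I (s v₀)).source := fun v hv => by
    rw [extChartAt_source]; exact (hOchart hv).2
  refine ⟨O, fun v => ((tangentCoordChange J v₀ v v).comp (P v)).toLinearMap, hO, hv₀,
    fun v hv => (hOchart hv).1, fun w v hv => ?_, fun w v hv => ?_, fun v hv x hx => ?_⟩
  · have hP : ContMDiffAt J 𝓘(ℝ, EJ →L[ℝ] EJ) (⊤ : ℕ∞) P v :=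
      contMDiffAt_const.sub ((hσ v hv).clm_comp
        (contMDiffAt_inTangentCoordinates_mfderiv hs v₀ (hOchart hv).1 (hOchart hv).2))
    exact (contMDiffAt_section_of_tangentCoordChange hO (fun v hv => (hOchart hv).1) hv
      (hP.clm_apply contMDiffAt_const) fun _ _ => rfl).contMDiffWithinAt
  · have key := hDP v hv w
    rw [inTangentCoordinates_mfderiv_apply (hOchart hv).1 (hOchart hv).2,
      ← map_zero (tangentCoordChange I (s v) (s v₀) (s v))] at key
    exact tangentCoordChange_injective (hextI v hv) key
  · have hDx : D v (tangentCoordChange J v v₀ v x) = 0 := by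
      rw [inTangentCoordinates_mfderiv_apply (hOchart hv).1 (hOchart hv).2]
      erw [tangentCoordChange_tangentCoordChange (hextJ v hv), hx, map_zero]
    have hP : ∀ y, D v y = 0 → P v y = y := fun y hy => by simp [P, hy]
    change tangentCoordChange J v₀ v v (P v _) = x
    rw [hP _ hDx]
    exact tangentCoordChange_tangentCoordChange (hextJ v hv) x

end KernelProjection

section Decomposition

variable {E H : Type*} [NormedAddCommGroup E] [NormedSpace ℝ E] [TopologicalSpace H]
  {I : ModelWithCorners ℝ E H}
  {M : Type*} [TopologicalSpace M] [ChartedSpace H M] [IsManifold I (⊤ : ℕ∞) M]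
  {EJ HJ : Type*} [NormedAddCommGroup EJ] [NormedSpace ℝ EJ] [TopologicalSpace HJ]
  {J : ModelWithCorners ℝ EJ HJ}
  {V : Type*} [TopologicalSpace V] [ChartedSpace HJ V] [IsManifold J (⊤ : ℕ∞) V]
  {EU HU : Type*} [NormedAddCommGroup EU] [NormedSpace ℝ EU] [TopologicalSpace HU]
  {JU : ModelWithCorners ℝ EU HU}
  {U : Type*} [TopologicalSpace U] [ChartedSpace HU U]
  [FiniteDimensional ℝ EJ] [T2Space V] [SigmaCompactSpace V]

theorem exists_isCcFn_eqOn_one {K O : Set V} (hK : IsCompact K) (hO : IsOpen O) (hKO : K ⊆ O) :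
    ∃ ψ : V → ℝ, IsCcFn J ψ ∧ EqOn ψ 1 K ∧ tsupport ψ ⊆ O := by
  have := Manifold.locallyCompact_of_finiteDimensional J (M := V)
  obtain ⟨L, hL, hKL, hLO⟩ := exists_compact_between hK hO hKO
  obtain ⟨f, hf₀, hf₁, -⟩ := exists_contMDiffMap_zero_one_of_isClosed J (n := (⊤ : ℕ∞))
    isOpen_interior.isClosed_compl hK.isClosed
    (disjoint_compl_left_iff_subset.2 hKL)
  have hfL : tsupport f ⊆ L :=
    closure_minimal (fun x hx => interior_subset (not_not.1 fun h => hx (hf₀ h))) hL.isClosed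
  exact ⟨f, ⟨f.contMDiff, hL.of_isClosed_subset (isClosed_tsupport _) hfL⟩, hf₁, hfL.trans hLO⟩

theorem exists_finite_partitionOfUnity_cutoffs {K : Set V} (hK : IsCompact K) {O : V → Set V}
    (hO : ∀ v, IsOpen (O v)) (hvO : ∀ v, v ∈ O v) :
    ∃ (t : Finset V) (ρ : SmoothPartitionOfUnity t J V K) (ψ : t → V → ℝ),
      ρ.IsSubordinate (fun i => O i) ∧ (∀ i, IsCcFn J (ψ i)) ∧
      (∀ i, EqOn (ψ i) 1 (tsupport (ρ i) ∩ K)) ∧ ∀ i, tsupport (ψ i) ⊆ O i := by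
  obtain ⟨t, ht⟩ := hK.elim_finite_subcover O hO fun v _ => mem_iUnion.2 ⟨v, hvO v⟩
  obtain ⟨ρ, hρ⟩ := SmoothPartitionOfUnity.exists_isSubordinate J hK.isClosed
    (fun i : t => O i) (fun i => hO i) (by simpa only [iUnion_subtype] using ht)
  choose ψ hψ hψ₁ hψO using fun i : t => exists_isCcFn_eqOn_one (J := J)
    (hK.inter_left (isClosed_tsupport (ρ i))) (hO i) fun v hv => hρ i hv.1
  exact ⟨t, ρ, ψ, hρ, hψ, hψ₁, hψO⟩

/-- Over a finite cover of `p (supp W)` by domains of local kernel projections, the coordinates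
of `W` are weighted by a partition of unity and the projected coordinate vectors are cut off by
bump functions. -/
theorem IsSubmersion.exists_sum_kerGammaC_of_section_along [FiniteDimensional ℝ E]
    {s : V → M} (hs : ContMDiff J I (⊤ : ℕ∞) s) (hsub : IsSubmersion J I s)
    {p : U → V} (hp : ContMDiff JU J (⊤ : ℕ∞) p) {W : ∀ u : U, TangentSpace J (p u)}
    (hW : ContMDiff JU (J.prod 𝓘(ℝ, EJ)) (⊤ : ℕ∞) (fun u => (⟨p u, W u⟩ : TangentBundle J V)))
    (hWc : HasCompactSupport W) (hWs : ∀ u, mfderiv J I s (p u) (W u) = 0) :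
    ∃ (m : ℕ) (g : Fin m → U → ℝ) (C : Fin m → VectorFieldOn J V),
      (∀ i, IsCcFn JU (g i)) ∧ (∀ i, C i ∈ KerGammaC J I s) ∧
      ∀ u, W u = ∑ i, g i u • C i (p u) := by
  classical
  choose O C hO hvO hOchart hCsmooth hCs hCW using hsub.exists_local_kernel_projection hs
  obtain ⟨t, ρ, ψ, hρ, hψ, hψ₁, hψO⟩ :=
    exists_finite_partitionOfUnity_cutoffs (J := J) (hWc.image hp.continuous) hO hvO
  let b := Module.finBasis ℝ EJ
  let e := (Fintype.equivFin (t × Fin (Module.finrank ℝ EJ))).symm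
  refine ⟨_, fun a u => ρ (e a).1 (p u) *
      b.coord (e a).2 (tangentCoordChange J (p u) (e a).1 (p u) (W u)),
    fun a v => ψ (e a).1 v • C (e a).1 v (b (e a).2),
    fun a => isCcFn_mul_tangentCoordChange hp hW hWc (ρ _).contMDiff
      ((hρ _).trans (hOchart _)) (b.coord _).toContinuousLinearMap,
    fun a => smul_mem_kerGammaC_of_tsupport_subset (hO _) (hCsmooth _ _) (hCs _ _) (hψ _) (hψO _),
    fun u => ?_⟩
  rw [e.sum_comp (fun ij => (ρ ij.1 (p u) * b.coord ij.2
      (tangentCoordChange J (p u) ij.1 (p u) (W u))) • ψ ij.1 (p u) • C ij.1 (p u) (b ij.2)),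
    Fintype.sum_prod_type]
  by_cases hWu : W u = 0
  · have hcoord : ∀ (i : t) j, b.coord j (tangentCoordChange J (p u) i (p u) (W u)) = 0 :=
      fun i j => by rw [hWu]; erw [map_zero, map_zero]
    simp only [hcoord, mul_zero, zero_smul, Finset.sum_const_zero]
    exact hWu
  have hpu : p u ∈ p '' tsupport W := ⟨u, subset_tsupport _ hWu, rfl⟩
  have hlocal : ∀ i : t, ∑ j, (ρ i (p u) * b.coord j
      (tangentCoordChange J (p u) i (p u) (W u))) • ψ i (p u) • C i (p u) (b j)
        = ρ i (p u) • W u := fun i => by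
    by_cases hρu : ρ i (p u) = 0
    · simp [hρu]
    have hρsupp : p u ∈ tsupport (ρ i) := subset_tsupport _ hρu
    simp_rw [hψ₁ i ⟨hρsupp, hpu⟩, Pi.one_apply, one_smul, mul_smul, ← Finset.smul_sum,
      ← map_smul, ← map_sum, Module.Basis.coord_apply, b.sum_repr]
    rw [hCW i (p u) (hρ i hρsupp) (W u) (hWs u)]
  rw [Fintype.sum_congr _ _ hlocal, ← Finset.sum_smul, ← finsum_eq_sum_of_fintype,
    ρ.sum_eq_one hpu, one_smul]

end Decomposition

section PullbackComp

variable {E H : Type*} [NormedAddCommGroup E] [NormedSpace ℝ E] [TopologicalSpace H]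
  {I : ModelWithCorners ℝ E H}
  {M : Type*} [TopologicalSpace M] [ChartedSpace H M]
  {EJ HJ : Type*} [NormedAddCommGroup EJ] [NormedSpace ℝ EJ] [TopologicalSpace HJ]
  {J : ModelWithCorners ℝ EJ HJ} {V : Type*} [TopologicalSpace V] [ChartedSpace HJ V]
  {EU HU : Type*} [NormedAddCommGroup EU] [NormedSpace ℝ EU] [TopologicalSpace HU]
  {JU : ModelWithCorners ℝ EU HU} {U : Type*} [TopologicalSpace U] [ChartedSpace HU U]

theorem IsSubmersion.comp {φ : V → M} {p : U → V} (hφ : ContMDiff J I (⊤ : ℕ∞) φ)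
    (hp : ContMDiff JU J (⊤ : ℕ∞) p) (hφs : IsSubmersion J I φ) (hps : IsSubmersion JU J p) :
    IsSubmersion JU I (φ ∘ p) := fun u => by
  rw [mfderiv_comp u (hφ.mdifferentiableAt (by simp)) (hp.mdifferentiableAt (by simp))]
  exact (hφs (p u)).comp (hps u)

variable [IsManifold J (⊤ : ℕ∞) V] [IsManifold JU (⊤ : ℕ∞) U]

theorem mem_pullbackModule_comp {φ : V → M} {p : U → V} (hp : ContMDiff JU J (⊤ : ℕ∞) p)
    {F : Set (VectorFieldOn I M)} {X : VectorFieldOn JU U} (hX : X ∈ XC JU) {m : ℕ}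
    {g : Fin m → U → ℝ} {C : Fin m → VectorFieldOn J V}
    (hg : ∀ i, IsCcFn JU (g i)) (hC : ∀ i, C i ∈ PullbackModule J I φ F)
    (hXC : ∀ u, mfderiv JU I (φ ∘ p) u (X u) = ∑ i, g i u • mfderiv J I φ (p u) (C i (p u))) :
    X ∈ PullbackModule JU I (φ ∘ p) F := by
  classical
  choose m' h Y hh hY hCY using fun i => (hC i).2
  let e := (Fintype.equivFin (Σ i, Fin (m' i))).symm
  refine ⟨hX, _, fun a u => g (e a).1 u * h (e a).1 (e a).2 (p u), fun a => Y (e a).1 (e a).2,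
    fun a => (hg _).mul ((hh _ _).1.comp hp), fun a => hY _ _, fun u => ?_⟩
  rw [hXC u, e.sum_comp fun ij => (g ij.1 u * h ij.1 ij.2 (p u)) • Y ij.1 ij.2 ((φ ∘ p) u),
    Fintype.sum_sigma]
  refine Finset.sum_congr rfl fun i _ => ?_
  simp_rw [hCY i (p u), Finset.smul_sum, mul_smul]
  rfl

end PullbackComp

section Bisubmersion

variable {n k l : ℕ} {M V U : Type*}
  [TopologicalSpace M] [ChartedSpace (EuclideanSpace ℝ (Fin n)) M] [IsManifold (𝓡 n) (⊤ : ℕ∞) M]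
  [TopologicalSpace V] [ChartedSpace (EuclideanSpace ℝ (Fin k)) V] [IsManifold (𝓡 k) (⊤ : ℕ∞) V]
  [TopologicalSpace U] [ChartedSpace (EuclideanSpace ℝ (Fin l)) U] [IsManifold (𝓡 l) (⊤ : ℕ∞) U]
  {F : Set (VectorFieldOn (𝓡 n) M)} {tV sV : V → M} {p : U → V}

theorem IsASBisubmersion.symm (hbi : IsASBisubmersion (k := k) F tV sV) :
    IsASBisubmersion (k := k) F sV tV where
  smooth_t := hbi.smooth_s
  smooth_s := hbi.smooth_t
  subm_t := hbi.subm_s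
  subm_s := hbi.subm_t
  pullback_t := by rw [hbi.pullback_s, setAddVF_comm]
  pullback_s := by rw [hbi.pullback_t, setAddVF_comm]

variable [T2Space V] [SigmaCompactSpace V]

theorem IsASBisubmersion.setAddVF_subset_pullbackModule_comp
    (hbi : IsASBisubmersion (k := k) F tV sV) (hp : ContMDiff (𝓡 l) (𝓡 k) (⊤ : ℕ∞) p) :
    setAddVF (𝓡 l) (KerGammaC (𝓡 l) (𝓡 n) (tV ∘ p)) (KerGammaC (𝓡 l) (𝓡 n) (sV ∘ p))
      ⊆ PullbackModule (𝓡 l) (𝓡 n) (tV ∘ p) F := by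
  rintro X ⟨A, hA, B, hB, hX⟩
  obtain ⟨m, g, C, hg, hC, hBC⟩ := hbi.subm_s.exists_sum_kerGammaC_of_section_along hbi.smooth_s
    hp (W := fun u => mfderiv (𝓡 l) (𝓡 k) p u (B u))
    ((hp.contMDiff_tangentMap (m := (⊤ : ℕ∞)) (by simp)).comp hB.1.1)
    (HasCompactSupport.mono hB.1.2 fun u hpB hBu => hpB (by simp only [hBu]; exact map_zero _))
    fun u => by rw [← mfderiv_comp_apply_of_contMDiff hp hbi.smooth_s]; exact hB.2 u
  have hCt : ∀ i, C i ∈ PullbackModule (𝓡 k) (𝓡 n) tV F := fun i => by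
    rw [hbi.pullback_t]
    exact ⟨_, zero_mem_kerGammaC, C i, hC i, fun v => (zero_add _).symm⟩
  refine mem_pullbackModule_comp hp (funext hX ▸ add_mem_XC hA.1 hB.1) hg hCt
    fun u => ?_
  rw [hX u, map_add, hA.2 u, zero_add, mfderiv_comp_apply_of_contMDiff hp hbi.smooth_t, hBC u,
    map_sum]
  simp_rw [map_smul]

variable [T2Space U] [SigmaCompactSpace U]

/-- Lift a cut-off of `Y` along `tV`, keep the `Γ_c(ker dsV)` part `B` of the lift, and lift
`f • B` along `p`. -/
theorem IsASBisubmersion.exists_lift_mem_kerGammaC (hbi : IsASBisubmersion (k := k) F tV sV)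
    (hp : ContMDiff (𝓡 l) (𝓡 k) (⊤ : ℕ∞) p) (hpsub : IsSubmersion (𝓡 l) (𝓡 k) p)
    {Y : VectorFieldOn (𝓡 n) M} (hY : Y ∈ F) (hYs : IsSmoothVF (𝓡 n) Y) {f : U → ℝ}
    (hf : IsCcFn (𝓡 l) f) :
    ∃ Bp ∈ KerGammaC (𝓡 l) (𝓡 n) (sV ∘ p),
      ∀ u, mfderiv (𝓡 l) (𝓡 n) (tV ∘ p) u (Bp u) = f u • Y (tV (p u)) := by
  obtain ⟨χ, hχ, hχ₁, -⟩ := exists_isCcFn_eqOn_one (J := 𝓡 k)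
    (IsCompact.image hf.2 hp.continuous) isOpen_univ (subset_univ _)
  obtain ⟨Z, hZ, hZt⟩ := hbi.subm_t.exists_lift_smul_mem_XC hbi.smooth_t hYs hχ
  have hZF : Z ∈ PullbackModule (𝓡 k) (𝓡 n) tV F :=
    ⟨hZ, 1, fun _ => χ, fun _ => Y, fun _ => hχ, fun _ => hY, fun v => by simp [hZt v]⟩
  rw [hbi.pullback_t] at hZF
  obtain ⟨A, hA, B, hB, hZAB⟩ := hZF
  have hBt : ∀ v, mfderiv (𝓡 k) (𝓡 n) tV v (B v) = χ v • Y (tV v) := fun v => by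
    rw [← hZt, hZAB, map_add, hA.2, zero_add]
  obtain ⟨Bp, hBp, hBpp⟩ := hpsub.exists_lift_smul_mem_XC hp hB.1.1 hf
  refine ⟨Bp, ⟨hBp, fun u => ?_⟩, fun u => ?_⟩
  · rw [mfderiv_comp_apply_of_contMDiff hp hbi.smooth_s, hBpp u, map_smul, hB.2, smul_zero]
  · rw [mfderiv_comp_apply_of_contMDiff hp hbi.smooth_t, hBpp u, map_smul, hBt]
    by_cases hfu : f u = 0
    · simp [hfu]
    · rw [hχ₁ ⟨u, subset_tsupport _ hfu, rfl⟩, Pi.one_apply, one_smul]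

theorem IsASBisubmersion.pullbackModule_comp_subset (hbi : IsASBisubmersion (k := k) F tV sV)
    (hFsub : F ⊆ XC (𝓡 n)) (hp : ContMDiff (𝓡 l) (𝓡 k) (⊤ : ℕ∞) p)
    (hpsub : IsSubmersion (𝓡 l) (𝓡 k) p) :
    PullbackModule (𝓡 l) (𝓡 n) (tV ∘ p) F
      ⊆ setAddVF (𝓡 l) (KerGammaC (𝓡 l) (𝓡 n) (tV ∘ p)) (KerGammaC (𝓡 l) (𝓡 n) (sV ∘ p)) := by
  rintro X ⟨hX, m, f, Y, hf, hY, hXY⟩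
  choose Bp hBp hBpt using fun i =>
    hbi.exists_lift_mem_kerGammaC hp hpsub (hY i) (hFsub (hY i)).1 (hf i)
  have hB := sum_mem_kerGammaC Finset.univ fun i _ => hBp i
  refine ⟨fun u => X u - ∑ i, Bp i u, ⟨sub_mem_XC hX hB.1, fun u => ?_⟩, _, hB,
    fun u => (sub_add_cancel _ _).symm⟩
  change mfderiv (𝓡 l) (𝓡 n) (tV ∘ p) u (X u - ∑ i, Bp i u) = 0
  rw [map_sub, map_sum, hXY u, sub_eq_zero]
  simp_rw [hBpt]
  rfl

theorem IsASBisubmersion.pullbackModule_comp_eq (hbi : IsASBisubmersion (k := k) F tV sV)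
    (hFsub : F ⊆ XC (𝓡 n)) (hp : ContMDiff (𝓡 l) (𝓡 k) (⊤ : ℕ∞) p)
    (hpsub : IsSubmersion (𝓡 l) (𝓡 k) p) :
    PullbackModule (𝓡 l) (𝓡 n) (tV ∘ p) F
      = setAddVF (𝓡 l) (KerGammaC (𝓡 l) (𝓡 n) (tV ∘ p)) (KerGammaC (𝓡 l) (𝓡 n) (sV ∘ p)) :=
  (hbi.pullbackModule_comp_subset hFsub hp hpsub).antisymm
    (hbi.setAddVF_subset_pullbackModule_comp hp)

end Bisubmersion

theorem statement_7_general
    {n k l : ℕ} {M V U : Type*}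
    [TopologicalSpace M] [ChartedSpace (EuclideanSpace ℝ (Fin n)) M]
    [IsManifold (𝓡 n) (⊤ : ℕ∞) M]
    [TopologicalSpace V] [ChartedSpace (EuclideanSpace ℝ (Fin k)) V]
    [IsManifold (𝓡 k) (⊤ : ℕ∞) V] [T2Space V] [SigmaCompactSpace V]
    [TopologicalSpace U] [ChartedSpace (EuclideanSpace ℝ (Fin l)) U]
    [IsManifold (𝓡 l) (⊤ : ℕ∞) U] [T2Space U] [SigmaCompactSpace U]
    (F : Set (VectorFieldOn (𝓡 n) M)) (hF : IsSingularFoliation F)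
    (tV sV : V → M) (hbi : IsASBisubmersion (k := k) F tV sV)
    (p : U → V) (hp : ContMDiff (𝓡 l) (𝓡 k) (⊤ : ℕ∞) p)
    (hpsub : IsSubmersion (𝓡 l) (𝓡 k) p) :
    IsASBisubmersion (k := l) F (tV ∘ p) (sV ∘ p) := by
  have hFsub : F ⊆ XC (𝓡 n) := hF.submodule.subset_XC
  exact
    { smooth_t := hbi.smooth_t.comp hp
      smooth_s := hbi.smooth_s.comp hp
      subm_t := hbi.subm_t.comp hbi.smooth_t hp hpsub
      subm_s := hbi.subm_s.comp hbi.smooth_s hp hpsub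
      pullback_t := hbi.pullbackModule_comp_eq hFsub hp hpsub
      pullback_s := by rw [hbi.symm.pullbackModule_comp_eq hFsub hp hpsub, setAddVF_comm] }

/-- precomposing a bisubmersion with a submersion yields a
bisubmersion. -/
theorem statement_7
    {n k l : ℕ} {M V U : Type*}
    [TopologicalSpace M] [ChartedSpace (EuclideanSpace ℝ (Fin n)) M]
    [IsManifold (𝓡 n) (⊤ : ℕ∞) M] [T2Space M] [SigmaCompactSpace M]
    [TopologicalSpace V] [ChartedSpace (EuclideanSpace ℝ (Fin k)) V]
    [IsManifold (𝓡 k) (⊤ : ℕ∞) V] [T2Space V] [SigmaCompactSpace V]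
    [TopologicalSpace U] [ChartedSpace (EuclideanSpace ℝ (Fin l)) U]
    [IsManifold (𝓡 l) (⊤ : ℕ∞) U] [T2Space U] [SigmaCompactSpace U]
    (F : Set (VectorFieldOn (𝓡 n) M)) (hF : IsSingularFoliation F)
    (tV sV : V → M) (hbi : IsASBisubmersion (k := k) F tV sV)
    (p : U → V) (hp : ContMDiff (𝓡 l) (𝓡 k) (⊤ : ℕ∞) p)
    (hpsub : IsSubmersion (𝓡 l) (𝓡 k) p) :
    IsASBisubmersion (k := l) F (tV ∘ p) (sV ∘ p) :=
  statement_7_general F hF tV sV hbi p hp hpsub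

end
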